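/- arXiv:math/0408062 — 2 statements merged into one kernel-verified Lean document; each statement's English description precedes it below -/
import Mathlib

section
/- Let P ∈ ℂ[x,y,z,w] be weighted-homogeneous of degree 9 for the weights deg(x,y,z,w) = (1,2,3,4). In the polynomial ring ℂ[x,y,z,w,v,u], let M be the 6×6 antisymmetric matrix with upper-triangular entries M₁₂=0, M₁₃=z, M₁₄=v, M₁₅=y, M₁₆=x, M₂₃=w, M₂₄=u, M₂₅=z, M₂₆=y, M₃₄=P, M₃₅=u, M₃₆=v, M₄₅=w², M₄₆=zw, M₅₆=0. Then the ideal generated by the fifteen 4×4 Pfaffians of M equals the ideal generated by the six 2×2 minors of the 2×4 matrix [[x,y,z,v],[y,z,w,u]] (namely xz−y², xw−yz, xu−yv, yw−z², yu−zv, zu−wv) together with the three elements v²−z²w−xP, vu−zw²−yP, u²−w³−zP. -/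
open Matrix MvPolynomial

/-- The 4×4 Pfaffian `Pf_{ijkl}(N) = N_{ij}N_{kl} − N_{ik}N_{jl} + N_{il}N_{jk}`
of a 6×6 antisymmetric matrix. -/
def pf {R : Type*} [CommRing R] (N : Matrix (Fin 6) (Fin 6) R) (i j k l : Fin 6) : R :=
  N i j * N k l - N i k * N j l + N i l * N j k

/-- The set of the fifteen 4×4 Pfaffians of a 6×6 antisymmetric matrix. -/
def pfaffians {R : Type*} [CommRing R] (N : Matrix (Fin 6) (Fin 6) R) : Set R :=
  { x | ∃ i j k l : Fin 6, i < j ∧ j < k ∧ k < l ∧ x = pf N i j k l }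

set_option maxHeartbeats 1000000

/-- In `ℂ[x,y,z,w,v,u]` (variables `X 0, …, X 5` of weights `1,2,3,4,5,6`), let `P` be a
weighted-homogeneous polynomial of degree 9 in the variables `x,y,z,w` only, and let `M` be
the antisymmetric matrix of Proposition `primamatrice`.  Then the ideal of the fifteen
4×4 Pfaffians of `M` equals the ideal generated by the six 2×2 minors of
`[[x,y,z,v],[y,z,w,u]]` together with `v²−z²w−xP`, `vu−zw²−yP`, `u²−w³−zP`. -/
theorem pfaffian_ideal_eq_minors_plus_relations
    (P : MvPolynomial (Fin 6) ℂ)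
    (hPvars : ∀ d ∈ P.support, d 4 = 0 ∧ d 5 = 0)
    (hPhom : P.IsWeightedHomogeneous ![1, 2, 3, 4, 5, 6] 9)
    (M : Matrix (Fin 6) (Fin 6) (MvPolynomial (Fin 6) ℂ))
    (hM : M = !![0, 0, X 2, X 4, X 1, X 0;
                 0, 0, X 3, X 5, X 2, X 1;
                 -X 2, -X 3, 0, P, X 5, X 4;
                 -X 4, -X 5, -P, 0, (X 3)^2, X 2 * X 3;
                 -X 1, -X 2, -X 5, -(X 3)^2, 0, 0;
                 -X 0, -X 1, -X 4, -(X 2 * X 3), 0, 0]) :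
    Ideal.span (pfaffians M) =
      Ideal.span ({X 0 * X 2 - (X 1)^2, X 0 * X 3 - X 1 * X 2, X 0 * X 5 - X 1 * X 4,
        X 1 * X 3 - (X 2)^2, X 1 * X 5 - X 2 * X 4, X 2 * X 5 - X 3 * X 4,
        (X 4)^2 - (X 2)^2 * X 3 - X 0 * P,
        X 4 * X 5 - X 2 * (X 3)^2 - X 1 * P,
        (X 5)^2 - (X 3)^3 - X 2 * P} : Set (MvPolynomial (Fin 6) ℂ)) := by

  subst hM
  set S : Set (MvPolynomial (Fin 6) ℂ) :=
    ({X 0 * X 2 - (X 1)^2, X 0 * X 3 - X 1 * X 2, X 0 * X 5 - X 1 * X 4,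
        X 1 * X 3 - (X 2)^2, X 1 * X 5 - X 2 * X 4, X 2 * X 5 - X 3 * X 4,
        (X 4)^2 - (X 2)^2 * X 3 - X 0 * P,
        X 4 * X 5 - X 2 * (X 3)^2 - X 1 * P,
        (X 5)^2 - (X 3)^3 - X 2 * P} : Set (MvPolynomial (Fin 6) ℂ)) with hS
  set N : Matrix (Fin 6) (Fin 6) (MvPolynomial (Fin 6) ℂ) :=
    !![0, 0, X 2, X 4, X 1, X 0;
       0, 0, X 3, X 5, X 2, X 1;
       -X 2, -X 3, 0, P, X 5, X 4;
       -X 4, -X 5, -P, 0, (X 3)^2, X 2 * X 3;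
       -X 1, -X 2, -X 5, -(X 3)^2, 0, 0;
       -X 0, -X 1, -X 4, -(X 2 * X 3), 0, 0] with hN
  have hg1 : X 0 * X 2 - (X 1)^2 ∈ Ideal.span S := Ideal.subset_span (by simp [hS])
  have hg2 : X 0 * X 3 - X 1 * X 2 ∈ Ideal.span S := Ideal.subset_span (by simp [hS])
  have hg3 : X 0 * X 5 - X 1 * X 4 ∈ Ideal.span S := Ideal.subset_span (by simp [hS])
  have hg4 : X 1 * X 3 - (X 2)^2 ∈ Ideal.span S := Ideal.subset_span (by simp [hS])
  have hg5 : X 1 * X 5 - X 2 * X 4 ∈ Ideal.span S := Ideal.subset_span (by simp [hS])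
  have hg6 : X 2 * X 5 - X 3 * X 4 ∈ Ideal.span S := Ideal.subset_span (by simp [hS])
  have hg7 : (X 4)^2 - (X 2)^2 * X 3 - X 0 * P ∈ Ideal.span S := Ideal.subset_span (by simp [hS])
  have hg8 : X 4 * X 5 - X 2 * (X 3)^2 - X 1 * P ∈ Ideal.span S := Ideal.subset_span (by simp [hS])
  have hg9 : (X 5)^2 - (X 3)^3 - X 2 * P ∈ Ideal.span S := Ideal.subset_span (by simp [hS])
  have hpfmem : ∀ i j k l : Fin 6, i < j → j < k → k < l →
      pf N i j k l ∈ Ideal.span (pfaffians N) := fun i j k l h1 h2 h3 =>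
    Ideal.subset_span ⟨i, j, k, l, h1, h2, h3, rfl⟩
  apply le_antisymm
  · rw [Ideal.span_le]
    rintro p ⟨i, j, k, l, hij, hjk, hkl, rfl⟩
    fin_cases i <;> fin_cases j <;> (try exact absurd hij (by decide)) <;>
      fin_cases k <;> (try exact absurd hjk (by decide)) <;>
      fin_cases l <;> (try exact absurd hkl (by decide)) <;>
      rw [SetLike.mem_coe]
    · show pf N 0 1 2 3 ∈ Ideal.span S
      rw [show pf N 0 1 2 3 = -(X 2 * X 5 - X 3 * X 4) by simp [pf, hN, show (5:Fin 6) = (4:Fin 5).succ from rfl, Matrix.cons_val_succ]; ring]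
      exact neg_mem hg6
    · show pf N 0 1 2 4 ∈ Ideal.span S
      rw [show pf N 0 1 2 4 = X 1 * X 3 - (X 2)^2 by simp [pf, hN, show (5:Fin 6) = (4:Fin 5).succ from rfl, Matrix.cons_val_succ]; ring]
      exact hg4
    · show pf N 0 1 2 5 ∈ Ideal.span S
      rw [show pf N 0 1 2 5 = X 0 * X 3 - X 1 * X 2 by simp [pf, hN, show (5:Fin 6) = (4:Fin 5).succ from rfl, Matrix.cons_val_succ]; ring]
      exact hg2
    · show pf N 0 1 3 4 ∈ Ideal.span S
      rw [show pf N 0 1 3 4 = X 1 * X 5 - X 2 * X 4 by simp [pf, hN, show (5:Fin 6) = (4:Fin 5).succ from rfl, Matrix.cons_val_succ]; ring]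
      exact hg5
    · show pf N 0 1 3 5 ∈ Ideal.span S
      rw [show pf N 0 1 3 5 = X 0 * X 5 - X 1 * X 4 by simp [pf, hN, show (5:Fin 6) = (4:Fin 5).succ from rfl, Matrix.cons_val_succ]; ring]
      exact hg3
    · show pf N 0 1 4 5 ∈ Ideal.span S
      rw [show pf N 0 1 4 5 = X 0 * X 2 - (X 1)^2 by simp [pf, hN, show (5:Fin 6) = (4:Fin 5).succ from rfl, Matrix.cons_val_succ]; ring]
      exact hg1
    · show pf N 0 2 3 4 ∈ Ideal.span S
      rw [show pf N 0 2 3 4 = -(X 4 * X 5 - X 2 * (X 3)^2 - X 1 * P) by simp [pf, hN, show (5:Fin 6) = (4:Fin 5).succ from rfl, Matrix.cons_val_succ]; ring]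
      exact neg_mem hg8
    · show pf N 0 2 3 5 ∈ Ideal.span S
      rw [show pf N 0 2 3 5 = -((X 4)^2 - (X 2)^2 * X 3 - X 0 * P) by simp [pf, hN, show (5:Fin 6) = (4:Fin 5).succ from rfl, Matrix.cons_val_succ]; ring]
      exact neg_mem hg7
    · show pf N 0 2 4 5 ∈ Ideal.span S
      rw [show pf N 0 2 4 5 = X 0 * X 5 - X 1 * X 4 by simp [pf, hN, show (5:Fin 6) = (4:Fin 5).succ from rfl, Matrix.cons_val_succ]; ring]
      exact hg3
    · show pf N 0 3 4 5 ∈ Ideal.span S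
      rw [show pf N 0 3 4 5 = X 3 * (X 0 * X 3 - X 1 * X 2) by simp [pf, hN, show (5:Fin 6) = (4:Fin 5).succ from rfl, Matrix.cons_val_succ]; ring]
      exact Ideal.mul_mem_left _ _ hg2
    · show pf N 1 2 3 4 ∈ Ideal.span S
      rw [show pf N 1 2 3 4 = -((X 5)^2 - (X 3)^3 - X 2 * P) by simp [pf, hN, show (5:Fin 6) = (4:Fin 5).succ from rfl, Matrix.cons_val_succ]; ring]
      exact neg_mem hg9
    · show pf N 1 2 3 5 ∈ Ideal.span S
      rw [show pf N 1 2 3 5 = -(X 4 * X 5 - X 2 * (X 3)^2 - X 1 * P) by simp [pf, hN, show (5:Fin 6) = (4:Fin 5).succ from rfl, Matrix.cons_val_succ]; ring]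
      exact neg_mem hg8
    · show pf N 1 2 4 5 ∈ Ideal.span S
      rw [show pf N 1 2 4 5 = X 1 * X 5 - X 2 * X 4 by simp [pf, hN, show (5:Fin 6) = (4:Fin 5).succ from rfl, Matrix.cons_val_succ]; ring]
      exact hg5
    · show pf N 1 3 4 5 ∈ Ideal.span S
      rw [show pf N 1 3 4 5 = X 3 * (X 1 * X 3 - (X 2)^2) by simp [pf, hN, show (5:Fin 6) = (4:Fin 5).succ from rfl, Matrix.cons_val_succ]; ring]
      exact Ideal.mul_mem_left _ _ hg4
    · show pf N 2 3 4 5 ∈ Ideal.span S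
      rw [show pf N 2 3 4 5 = -(X 3 * (X 2 * X 5 - X 3 * X 4)) by simp [pf, hN, show (5:Fin 6) = (4:Fin 5).succ from rfl, Matrix.cons_val_succ]; ring]
      exact neg_mem (Ideal.mul_mem_left _ _ hg6)
  · rw [Ideal.span_le]
    intro p hp
    simp only [hS, Set.mem_insert_iff, Set.mem_singleton_iff] at hp
    rcases hp with rfl | rfl | rfl | rfl | rfl | rfl | rfl | rfl | rfl
    · rw [show X 0 * X 2 - (X 1)^2 = pf N 0 1 4 5 by simp [pf, hN, show (5:Fin 6) = (4:Fin 5).succ from rfl, Matrix.cons_val_succ]; ring]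
      exact hpfmem 0 1 4 5 (by decide) (by decide) (by decide)
    · rw [show X 0 * X 3 - X 1 * X 2 = pf N 0 1 2 5 by simp [pf, hN, show (5:Fin 6) = (4:Fin 5).succ from rfl, Matrix.cons_val_succ]; ring]
      exact hpfmem 0 1 2 5 (by decide) (by decide) (by decide)
    · rw [show X 0 * X 5 - X 1 * X 4 = pf N 0 1 3 5 by simp [pf, hN, show (5:Fin 6) = (4:Fin 5).succ from rfl, Matrix.cons_val_succ]; ring]
      exact hpfmem 0 1 3 5 (by decide) (by decide) (by decide)
    · rw [show X 1 * X 3 - (X 2)^2 = pf N 0 1 2 4 by simp [pf, hN, show (5:Fin 6) = (4:Fin 5).succ from rfl, Matrix.cons_val_succ]; ring]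
      exact hpfmem 0 1 2 4 (by decide) (by decide) (by decide)
    · rw [show X 1 * X 5 - X 2 * X 4 = pf N 0 1 3 4 by simp [pf, hN, show (5:Fin 6) = (4:Fin 5).succ from rfl, Matrix.cons_val_succ]; ring]
      exact hpfmem 0 1 3 4 (by decide) (by decide) (by decide)
    · rw [show X 2 * X 5 - X 3 * X 4 = -(pf N 0 1 2 3) by simp [pf, hN, show (5:Fin 6) = (4:Fin 5).succ from rfl, Matrix.cons_val_succ]; ring]
      exact neg_mem (hpfmem 0 1 2 3 (by decide) (by decide) (by decide))
    · rw [show (X 4)^2 - (X 2)^2 * X 3 - X 0 * P = -(pf N 0 2 3 5) by simp [pf, hN, show (5:Fin 6) = (4:Fin 5).succ from rfl, Matrix.cons_val_succ]; ring]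
      exact neg_mem (hpfmem 0 2 3 5 (by decide) (by decide) (by decide))
    · rw [show X 4 * X 5 - X 2 * (X 3)^2 - X 1 * P = -(pf N 0 2 3 4) by simp [pf, hN, show (5:Fin 6) = (4:Fin 5).succ from rfl, Matrix.cons_val_succ]; ring]
      exact neg_mem (hpfmem 0 2 3 4 (by decide) (by decide) (by decide))
    · rw [show (X 5)^2 - (X 3)^3 - X 2 * P = -(pf N 1 2 3 4) by simp [pf, hN, show (5:Fin 6) = (4:Fin 5).succ from rfl, Matrix.cons_val_succ]; ring]
      exact neg_mem (hpfmem 1 2 3 4 (by decide) (by decide) (by decide))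
end

section
/- Let P₁₃ ∈ ℂ[X,Y] be weighted-homogeneous of degree 13 for the weights deg(X,Y) = (1,2). Then there exists a polynomial P̃₉ ∈ ℂ[x,y,z,w], weighted-homogeneous of degree 9 for the weights deg(x,y,z,w) = (1,2,3,4), such that P̃₉(X², X²Y, X²Y², X²Y³) = X⁵·P₁₃(X,Y) in ℂ[X,Y]; moreover P̃₉ is unique modulo the ideal of ℂ[x,y,z,w] generated by the three 2×2 minors xz−y², xw−yz, yw−z² of the matrix [[x,y,z],[y,z,w]] (i.e., any two such polynomials differ by an element of that ideal). -/
open MvPolynomial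

noncomputable section
namespace TC

abbrev R4 := MvPolynomial (Fin 4) ℂ
abbrev R2 := MvPolynomial (Fin 2) ℂ

def φ : R4 →ₐ[ℂ] R2 := aeval ![(X 0 : R2) ^ 2, (X 0) ^ 2 * X 1,
        (X 0) ^ 2 * (X 1) ^ 2, (X 0) ^ 2 * (X 1) ^ 3]

def I : Ideal R4 := Ideal.span ({X 0 * X 2 - (X 1)^2, X 0 * X 3 - X 1 * X 2,
          X 1 * X 3 - (X 2)^2} : Set R4)

def n : Fin 7 → R4 := ![X 0^9, X 0^7 * X 1, X 0^6 * X 2, X 0^5 * X 3,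
  X 0^3 * X 1 * X 3, X 0^2 * X 2 * X 3, X 0 * X 3^2]

lemma weight_four (d : Fin 4 →₀ ℕ) :
    Finsupp.weight ![1,2,3,4] d = d 0 + 2 * d 1 + 3 * d 2 + 4 * d 3 := by
  rw [Finsupp.weight_apply, Finsupp.sum_fintype]
  · simp [Fin.sum_univ_four]; ring
  · intro i; simp

lemma weight_two (d : Fin 2 →₀ ℕ) :
    Finsupp.weight ![1,2] d = d 0 + 2 * d 1 := by
  rw [Finsupp.weight_apply, Finsupp.sum_fintype]
  · simp [Fin.sum_univ_two]; ring
  · intro i; simp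

lemma monomial_eq_prod4 (d : Fin 4 →₀ ℕ) :
    (monomial d (1:ℂ) : R4) = X 0 ^ d 0 * X 1 ^ d 1 * X 2 ^ d 2 * X 3 ^ d 3 := by
  rw [monomial_eq, Finsupp.prod_fintype, Fin.prod_univ_four]
  · simp
  · intro i; simp

lemma IsWH.pow {w : Fin 4 → ℕ} {p : R4} {m : ℕ}
    (h : p.IsWeightedHomogeneous w m) (k : ℕ) :
    (p ^ k).IsWeightedHomogeneous w (k * m) := by
  induction k with
  | zero => simpa using isWeightedHomogeneous_one ..
  | succ k ih =>
      rw [pow_succ, Nat.succ_mul]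
      exact ih.mul h

lemma hn_hom (b : Fin 7) : (n b).IsWeightedHomogeneous ![1, 2, 3, 4] 9 := by
  have hx0 : (X 0 : R4).IsWeightedHomogeneous ![1,2,3,4] 1 := isWeightedHomogeneous_X ..
  have hx1 : (X 1 : R4).IsWeightedHomogeneous ![1,2,3,4] 2 := isWeightedHomogeneous_X ..
  have hx2 : (X 2 : R4).IsWeightedHomogeneous ![1,2,3,4] 3 := isWeightedHomogeneous_X ..
  have hx3 : (X 3 : R4).IsWeightedHomogeneous ![1,2,3,4] 4 := isWeightedHomogeneous_X ..
  fin_cases b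
  · exact IsWH.pow hx0 9
  · exact (IsWH.pow hx0 7).mul hx1
  · exact (IsWH.pow hx0 6).mul hx2
  · exact (IsWH.pow hx0 5).mul hx3
  · exact ((IsWH.pow hx0 3).mul hx1).mul hx3
  · exact ((IsWH.pow hx0 2).mul hx2).mul hx3
  · exact hx0.mul (IsWH.pow hx3 2)


lemma monomial_eq_prod2 (d : Fin 2 →₀ ℕ) :
    (monomial d (1:ℂ) : R2) = X 0 ^ d 0 * X 1 ^ d 1 := by
  rw [monomial_eq, Finsupp.prod_fintype, Fin.prod_univ_two]
  · simp
  · intro i; simp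

def m2 : Fin 7 → R2 := ![X 0^18, X 0^16 * X 1, X 0^14 * X 1^2, X 0^12 * X 1^3,
  X 0^10 * X 1^4, X 0^8 * X 1^5, X 0^6 * X 1^6]

def fd (b : Fin 7) : Fin 2 →₀ ℕ :=
  Finsupp.single 0 (18 - 2*(b:ℕ)) + Finsupp.single 1 (b:ℕ)

lemma fd_apply_one (b : Fin 7) : fd b 1 = (b:ℕ) := by
  simp [fd, Finsupp.single_apply]

lemma m2_eq (b : Fin 7) : m2 b = monomial (fd b) 1 := by
  fin_cases b <;> rw [monomial_eq_prod2] <;> simp [fd, Finsupp.single_apply, m2] <;> rfl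

lemma hn_aeval (b : Fin 7) : φ (n b) = m2 b := by
  fin_cases b
  · show φ (X 0^9) = X 0^18
    simp [φ]; ring
  · show φ (X 0^7 * X 1) = X 0^16 * X 1
    simp [φ]; ring
  · show φ (X 0^6 * X 2) = X 0^14 * X 1^2
    simp [φ]; ring
  · show φ (X 0^5 * X 3) = X 0^12 * X 1^3
    simp [φ]; ring
  · show φ (X 0^3 * X 1 * X 3) = X 0^10 * X 1^4
    simp [φ]; ring
  · show φ (X 0^2 * X 2 * X 3) = X 0^8 * X 1^5
    simp [φ]; ring
  · show φ (X 0 * X 3^2) = X 0^6 * X 1^6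
    simp [φ]; ring

lemma hI_aeval {p : R4} (hp : p ∈ I) : φ p = 0 := by
  have : I ≤ RingHom.ker (φ : R4 →+* R2) := by
    rw [I, Ideal.span_le]
    intro q hq
    simp only [Set.mem_insert_iff, Set.mem_singleton_iff] at hq
    rcases hq with rfl | rfl | rfl <;>
      · simp only [SetLike.mem_coe, RingHom.mem_ker]
        simp [φ]
        ring
  exact this hp

lemma indep (c : Fin 7 → ℂ) (h : ∑ b, c b • m2 b = 0) : ∀ b, c b = 0 := by
  intro b₀
  have h2 := congrArg (coeff (fd b₀)) h
  simp only [m2_eq, coeff_zero] at h2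
  rw [← h2]
  rw [coeff_sum]
  rw [Finset.sum_eq_single b₀]
  · simp
  · intro b _ hb
    have hfd : fd b ≠ fd b₀ := by
      intro hEq
      apply hb
      have := congrArg (fun f : Fin 2 →₀ ℕ => f 1) hEq
      simp only [fd_apply_one] at this
      exact Fin.val_injective this
    simp [coeff_monomial, hfd]
  · simp


lemma mem3 (c1 c2 c3 : R4) {e : R4}
    (h : e = c1 * (X 0 * X 2 - (X 1)^2) + c2 * (X 0 * X 3 - X 1 * X 2)
        + c3 * (X 1 * X 3 - (X 2)^2)) : e ∈ I := by
  rw [h]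
  refine Ideal.add_mem _ (Ideal.add_mem _ ?_ ?_) ?_ <;>
    exact Ideal.mul_mem_left _ _ (Ideal.subset_span (by simp))

set_option maxHeartbeats 4000000 in
lemma reduce (d : Fin 4 →₀ ℕ) (hd : Finsupp.weight ![1,2,3,4] d = 9) :
    ∃ b : Fin 7, (monomial d (1:ℂ) : R4) - n b ∈ I := by
  rw [weight_four] at hd
  rw [monomial_eq_prod4]
  generalize d 0 = i at hd ⊢
  generalize d 1 = j at hd ⊢
  generalize d 2 = k at hd ⊢
  generalize d 3 = l at hd ⊢
  have hl : l ≤ 2 := by omega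
  have hk : k ≤ 3 := by omega
  have hj : j ≤ 4 := by omega
  have hi : i ≤ 9 := by omega
  interval_cases l <;> interval_cases k <;> interval_cases j <;>
    first
      | (exfalso; omega)
      | (interval_cases i <;>
          first
            | (norm_num at hd; done)
            | (refine ⟨0, ?_⟩; rw [show (n 0 : R4) = X 0^9 from rfl]; refine mem3 0 0 0 ?_; ring1)
            | (refine ⟨1, ?_⟩; rw [show (n 1 : R4) = X 0^7 * X 1 from rfl]; refine mem3 0 0 0 ?_; ring1)
            | (refine ⟨2, ?_⟩; rw [show (n 2 : R4) = X 0^6 * X 2 from rfl]; refine mem3 0 0 0 ?_; ring1)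
            | (refine ⟨3, ?_⟩; rw [show (n 3 : R4) = X 0^5 * X 3 from rfl]; refine mem3 0 0 0 ?_; ring1)
            | (refine ⟨4, ?_⟩; rw [show (n 4 : R4) = X 0^3 * X 1 * X 3 from rfl]; refine mem3 0 0 0 ?_; ring1)
            | (refine ⟨5, ?_⟩; rw [show (n 5 : R4) = X 0^2 * X 2 * X 3 from rfl]; refine mem3 0 0 0 ?_; ring1)
            | (refine ⟨6, ?_⟩; rw [show (n 6 : R4) = X 0 * X 3^2 from rfl]; refine mem3 0 0 0 ?_; ring1)
            | (refine ⟨2, ?_⟩; rw [show (n 2 : R4) = X 0^6 * X 2 from rfl]; refine mem3 (-(X 0)^5) 0 0 ?_; ring1)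
            | (refine ⟨3, ?_⟩; rw [show (n 3 : R4) = X 0^5 * X 3 from rfl]; refine mem3 (-(X 0)^3 * X 1) (-(X 0)^4) 0 ?_; ring1)
            | (refine ⟨4, ?_⟩; rw [show (n 4 : R4) = X 0^3 * X 1 * X 3 from rfl]; refine mem3 (-(X 0 * (X 1)^2 + (X 0)^2 * X 2)) 0 (-(X 0)^3) ?_; ring1)
            | (refine ⟨3, ?_⟩; rw [show (n 3 : R4) = X 0^5 * X 3 from rfl]; refine mem3 0 (-(X 0)^4) 0 ?_; ring1)
            | (refine ⟨4, ?_⟩; rw [show (n 4 : R4) = X 0^3 * X 1 * X 3 from rfl]; refine mem3 (-((X 0)^2 * X 2)) 0 (-(X 0)^3) ?_; ring1)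
            | (refine ⟨5, ?_⟩; rw [show (n 5 : R4) = X 0^2 * X 2 * X 3 from rfl]; refine mem3 (-(X 1 * X 2)) (-(X 0 * X 2)) 0 ?_; ring1)
            | (refine ⟨4, ?_⟩; rw [show (n 4 : R4) = X 0^3 * X 1 * X 3 from rfl]; refine mem3 0 0 (-(X 0)^3) ?_; ring1)
            | (refine ⟨5, ?_⟩; rw [show (n 5 : R4) = X 0^2 * X 2 * X 3 from rfl]; refine mem3 0 (-(X 0 * X 2)) 0 ?_; ring1)
            | (refine ⟨6, ?_⟩; rw [show (n 6 : R4) = X 0 * X 3^2 from rfl]; refine mem3 0 (-(X 3)) (-(X 2)) ?_; ring1)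
            | (refine ⟨5, ?_⟩; rw [show (n 5 : R4) = X 0^2 * X 2 * X 3 from rfl]; refine mem3 (-(X 0 * X 3)) 0 0 ?_; ring1)
            | (refine ⟨6, ?_⟩; rw [show (n 6 : R4) = X 0 * X 3^2 from rfl]; refine mem3 0 (-(X 3)) 0 ?_; ring1))

lemma decomp (D : R4) (hD : D.IsWeightedHomogeneous ![1,2,3,4] 9) :
    ∃ c : Fin 7 → ℂ, D - ∑ b, c b • n b ∈ I := by
  have hmem : D ∈ (I.restrictScalars ℂ) ⊔ Submodule.span ℂ (Set.range n) := by
    have hsum : D = ∑ v ∈ D.support, monomial v (coeff v D) := (as_sum D)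
    rw [hsum]
    refine Submodule.sum_mem _ ?_
    intro v hv
    have hw : Finsupp.weight ![1,2,3,4] v = 9 := hD (mem_support_iff.mp hv)
    obtain ⟨b, hb⟩ := reduce v hw
    have hsplit : (monomial v (coeff v D) : R4)
        = (coeff v D) • (monomial v 1 - n b) + (coeff v D) • n b := by
      rw [smul_sub, sub_add_cancel, smul_monomial, smul_eq_mul, mul_one]
    rw [hsplit]
    refine Submodule.add_mem _ ?_ ?_
    · exact Submodule.mem_sup_left (Submodule.smul_mem _ _ hb)
    · exact Submodule.mem_sup_right
        (Submodule.smul_mem _ _ (Submodule.subset_span ⟨b, rfl⟩))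
  obtain ⟨x, hx, y, hy, hxy⟩ := Submodule.mem_sup.mp hmem
  obtain ⟨c, hc⟩ := (Submodule.mem_span_range_iff_exists_fun ℂ).mp hy
  refine ⟨c, ?_⟩
  have : D - ∑ b, c b • n b = x := by rw [← hxy, hc]; ring
  rw [this]
  exact hx

def fd2 (b : Fin 7) : Fin 2 →₀ ℕ :=
  Finsupp.single 0 (13 - 2*(b:ℕ)) + Finsupp.single 1 (b:ℕ)

lemma fd2_apply_one (b : Fin 7) : fd2 b 1 = (b:ℕ) := by
  simp [fd2, Finsupp.single_apply]

lemma P13_eq (P : R2) (hP : P.IsWeightedHomogeneous ![1,2] 13) :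
    P = ∑ b : Fin 7, monomial (fd2 b) (coeff (fd2 b) P) := by
  ext d
  rw [coeff_sum]
  simp only [coeff_monomial]
  by_cases h : coeff d P = 0
  · rw [h]
    refine (Finset.sum_eq_zero ?_).symm
    intro b _
    split_ifs with hbd
    · rw [hbd, h]
    · rfl
  · have hw := hP h
    rw [weight_two] at hw
    have hd1 : d 1 ≤ 6 := by omega
    set b₀ : Fin 7 := ⟨d 1, by omega⟩ with hb₀
    have hfd : fd2 b₀ = d := by
      ext i
      fin_cases i
      · simp [fd2, Finsupp.single_apply, hb₀]
        omega
      · simp [fd2, Finsupp.single_apply, hb₀]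
    rw [Finset.sum_eq_single b₀]
    · rw [if_pos hfd, hfd]
    · intro b _ hb
      rw [if_neg]
      intro hEq
      apply hb
      have := congrArg (fun f : Fin 2 →₀ ℕ => f 1) (hEq.trans hfd.symm)
      simp only [fd2_apply_one] at this
      exact Fin.val_injective this
    · intro hh
      exact absurd (Finset.mem_univ b₀) hh

lemma X5_mul (c : ℂ) (b : Fin 7) :
    (X 0 : R2)^5 * monomial (fd2 b) c = c • m2 b := by
  rw [m2_eq, smul_monomial, smul_eq_mul, mul_one, X_pow_eq_monomial, monomial_mul, one_mul]
  have hb : (b:ℕ) ≤ 6 := b.is_le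
  have : Finsupp.single (0 : Fin 2) 5 + fd2 b = fd b := by
    ext i
    fin_cases i
    · simp [fd2, fd, Finsupp.single_apply]
      omega
    · simp [fd2, fd, Finsupp.single_apply]
  rw [this]

end TC

open TC in
/-- Let `P₁₃ ∈ ℂ[X,Y]` be weighted-homogeneous of degree 13 for weights `(1,2)`.
Then there exists `P̃₉ = Q ∈ ℂ[x,y,z,w]`, weighted-homogeneous of degree 9 for weights
`(1,2,3,4)`, with `Q(X², X²Y, X²Y², X²Y³) = X⁵·P₁₃` in `ℂ[X,Y]`; moreover `Q` is unique
modulo the ideal generated by the three 2×2 minors `xz−y², xw−yz, yw−z²` of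
`[[x,y,z],[y,z,w]]`. -/
theorem exists_P9_unique_mod_minors
    (P13 : MvPolynomial (Fin 2) ℂ)
    (hP13 : P13.IsWeightedHomogeneous ![1, 2] 13) :
    ∃ Q : MvPolynomial (Fin 4) ℂ,
      Q.IsWeightedHomogeneous ![1, 2, 3, 4] 9 ∧
      aeval ![(X 0 : MvPolynomial (Fin 2) ℂ) ^ 2, (X 0) ^ 2 * X 1,
        (X 0) ^ 2 * (X 1) ^ 2, (X 0) ^ 2 * (X 1) ^ 3] Q = (X 0) ^ 5 * P13 ∧
      ∀ Q' : MvPolynomial (Fin 4) ℂ,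
        Q'.IsWeightedHomogeneous ![1, 2, 3, 4] 9 →
        aeval ![(X 0 : MvPolynomial (Fin 2) ℂ) ^ 2, (X 0) ^ 2 * X 1,
          (X 0) ^ 2 * (X 1) ^ 2, (X 0) ^ 2 * (X 1) ^ 3] Q' = (X 0) ^ 5 * P13 →
        Q - Q' ∈ Ideal.span ({X 0 * X 2 - (X 1)^2, X 0 * X 3 - X 1 * X 2,
          X 1 * X 3 - (X 2)^2} : Set (MvPolynomial (Fin 4) ℂ)) := by
  classical
  set c0 : Fin 7 → ℂ := fun b => coeff (fd2 b) P13 with hc0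
  set Q : R4 := ∑ b, c0 b • n b with hQ
  have hQmem : Q ∈ weightedHomogeneousSubmodule ℂ ![1,2,3,4] 9 :=
    Submodule.sum_mem _ fun b _ => Submodule.smul_mem _ _
      ((mem_weightedHomogeneousSubmodule _ _ _ _).mpr (hn_hom b))
  have hQhom : Q.IsWeightedHomogeneous ![1,2,3,4] 9 :=
    (mem_weightedHomogeneousSubmodule _ _ _ _).mp hQmem
  have hQaeval : φ Q = (X 0)^5 * P13 := by
    rw [hQ, map_sum]
    conv_rhs => rw [P13_eq P13 hP13]
    rw [Finset.mul_sum]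
    refine Finset.sum_congr rfl fun b _ => ?_
    rw [map_smul, hn_aeval]
    exact (X5_mul _ b).symm
  refine ⟨Q, hQhom, hQaeval, ?_⟩
  intro Q' hQ'hom hval
  have hval' : φ Q' = (X 0)^5 * P13 := hval
  have hDhom : (Q - Q').IsWeightedHomogeneous ![1,2,3,4] 9 :=
    (mem_weightedHomogeneousSubmodule _ _ _ _).mp
      (Submodule.sub_mem _ hQmem ((mem_weightedHomogeneousSubmodule _ _ _ _).mpr hQ'hom))
  obtain ⟨c, hc⟩ := decomp _ hDhom
  have hφD : φ (Q - Q') = 0 := by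
    rw [map_sub, hQaeval, hval', sub_self]
  have h0 : φ (Q - Q' - ∑ b, c b • n b) = 0 := hI_aeval hc
  rw [map_sub, hφD, zero_sub, neg_eq_zero, map_sum] at h0
  have h0' : ∑ b, c b • m2 b = 0 := by
    rw [← h0]
    exact Finset.sum_congr rfl fun b _ => by rw [map_smul, hn_aeval]
  have hczero := indep c h0'
  have hSzero : ∑ b, c b • n b = (0 : R4) :=
    Finset.sum_eq_zero fun b _ => by rw [hczero b, zero_smul]
  have hfinal : Q - Q' ∈ I := by
    have : Q - Q' = Q - Q' - ∑ b, c b • n b := by rw [hSzero, sub_zero]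
    rw [this]
    exact hc
  exact hfinal
end
end
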